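/- arXiv:1905.06449 — 2 statements merged into one kernel-verified Lean document; each statement's English description precedes it below -/
import Mathlib

section
/- Let π ≥ 0, L, U, K, D be real numbers with π < L < U, K ≥ 6, and D > 0, define the generation pricing function p(y) = π + ((L − π)/K)·(K·(U − π)/(L − π))^{y/D} and α = ln(K·(U−π)/(L−π)). Then for every real y and every real μ with 0 ≤ μ ≤ π, the inequality p(y) − μ ≥ (1/α)·D·p'(y) holds, where p'(y) denotes the derivative of p at y. -/
/-!
With `c = (L − π)/K` and `b = K(U − π)/(L − π) > 1` the price is `p(y) = π + c·b^(y/D)`, so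
`p'(y) = (ln b / D)·c·b^(y/D)` and `(1/α)·D·p'(y) = p(y) − π ≤ p(y) − μ`.
-/

lemma hasDerivAt_add_mul_rpow_div {b : ℝ} (hb : 0 < b) (a c D y : ℝ) :
    HasDerivAt (fun y : ℝ => a + c * b ^ (y / D)) (c * b ^ (y / D) * Real.log b / D) y := by
  have hexp : HasDerivAt (fun t : ℝ => b ^ t) (b ^ (y / D) * Real.log b) (y / D) :=
    (Real.hasStrictDerivAt_const_rpow hb (y / D)).hasDerivAt
  rw [show c * b ^ (y / D) * Real.log b / D = c * (b ^ (y / D) * Real.log b * (1 / D)) by ring]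
  exact ((hexp.comp y ((hasDerivAt_id y).div_const D)).const_mul c).const_add a

lemma one_div_log_mul_mul_deriv_add_mul_rpow_div {b D : ℝ} (hb : 1 < b) (hD : D ≠ 0)
    (a c y : ℝ) :
    1 / Real.log b * D * deriv (fun y : ℝ => a + c * b ^ (y / D)) y = c * b ^ (y / D) := by
  rw [(hasDerivAt_add_mul_rpow_div (by linarith) a c D y).deriv]
  have hlog : Real.log b ≠ 0 := (Real.log_pos hb).ne'
  field_simp

lemma one_lt_mul_div {K u d : ℝ} (hK : 1 ≤ K) (hd : 0 < d) (hdu : d < u) : 1 < K * u / d := by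
  rw [one_lt_div hd]
  nlinarith

theorem stmt_7_general (π L U K D : ℝ) (hπL : π < L) (hLU : L < U)
    (hK : 6 ≤ K) (hD : 0 < D) :
    ∀ y μ : ℝ, 0 ≤ μ → μ ≤ π →
      (π + ((L - π) / K) * (K * (U - π) / (L - π)) ^ (y / D)) - μ
        ≥ (1 / Real.log (K * (U - π) / (L - π))) * D
            * deriv (fun y : ℝ =>
                π + ((L - π) / K) * (K * (U - π) / (L - π)) ^ (y / D)) y := by
  intro y μ _ hμπ
  have hb : 1 < K * (U - π) / (L - π) :=
    one_lt_mul_div (by linarith) (by linarith) (by linarith)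
  rw [one_div_log_mul_mul_deriv_add_mul_rpow_div hb hD.ne']
  linarith

/-- Differential Allocation-Payment Relationship for the generation pricing
function `p(y) = π + ((L−π)/K)·(K·(U−π)/(L−π))^(y/D)` with
`α = ln(K·(U−π)/(L−π))`: for every `y` and every marginal cost value
`μ ∈ [0, π]`, `p(y) − μ ≥ (1/α)·D·p'(y)`. -/
theorem stmt_7 (π L U K D : ℝ) (hπ : 0 ≤ π) (hπL : π < L) (hLU : L < U)
    (hK : 6 ≤ K) (hD : 0 < D) :
    ∀ y μ : ℝ, 0 ≤ μ → μ ≤ π →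
      (π + ((L - π) / K) * (K * (U - π) / (L - π)) ^ (y / D)) - μ
        ≥ (1 / Real.log (K * (U - π) / (L - π))) * D
            * deriv (fun y : ℝ =>
                π + ((L - π) / K) * (K * (U - π) / (L - π)) ^ (y / D)) y :=
  stmt_7_general π L U K D hπL hLU hK hD
end

section
/- Let π ≥ 0, L, U, K, G be real numbers with π < L < U, K ≥ 6, G > 0, and let 0 ≤ s̲ ≤ s̄ be lower and upper solar forecast bounds. Define the conservative generation pricing function p(y) = π + ((L − π)/K)·(K·(U − π)/(L − π))^{y/(s̲+G)} and α₂ = ((s̄ + G)/(s̲ + G))·ln(K·(U−π)/(L−π)). Then for every real y, every actual solar value s with s̲ ≤ s ≤ s̄, and every real μ with 0 ≤ μ ≤ π, the inequality p(y) − μ ≥ (1/α₂)·(s + G)·p'(y) holds, where p'(y) denotes the derivative of p at y. -/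
/-!
Above the grid price the conservative price grows exponentially: `p y - π = c * b ^ (y / a)`, so
`p' = (log b / a) * (p - π)`. The right-hand side therefore equals `((s + G) / (s̄ + G)) * (p y - π)`,
which is at most `p y - π ≤ p y - μ`.
-/

noncomputable def expPrice (π c b a y : ℝ) : ℝ := π + c * b ^ (y / a)

theorem hasDerivAt_expPrice {b : ℝ} (π c a y : ℝ) (hb : 0 < b) :
    HasDerivAt (expPrice π c b a) (c * (b ^ (y / a) * Real.log b * (1 / a))) y := by
  have hdiv : HasDerivAt (fun y : ℝ => y / a) (1 / a) y := by
    simpa using (hasDerivAt_id y).div_const a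
  have hrpow := (Real.hasStrictDerivAt_const_rpow hb (y / a)).hasDerivAt.comp y hdiv
  exact (hrpow.const_mul c).const_add π

theorem deriv_expPrice {a b : ℝ} (π c y : ℝ) (hb : 0 < b) (ha : a ≠ 0) :
    deriv (expPrice π c b a) y = Real.log b / a * (expPrice π c b a y - π) := by
  rw [(hasDerivAt_expPrice π c a y hb).deriv, expPrice]
  field_simp
  ring

theorem one_lt_mul_div_sub {π L U K : ℝ} (hK : 1 ≤ K) (hπL : π < L) (hLU : L < U) :
    1 < K * (U - π) / (L - π) := by
  rw [one_lt_div (by linarith)]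
  nlinarith

theorem stmt_12_general (π L U K G slo shi : ℝ) (hπL : π < L) (hLU : L < U)
    (hK : 6 ≤ K) (hG : 0 < G) (hslo : 0 ≤ slo) :
    ∀ y s μ : ℝ, slo ≤ s → s ≤ shi → 0 ≤ μ → μ ≤ π →
      (π + ((L - π) / K) * (K * (U - π) / (L - π)) ^ (y / (slo + G))) - μ
        ≥ (1 / (((shi + G) / (slo + G)) * Real.log (K * (U - π) / (L - π))))
            * (s + G)
            * deriv (fun y : ℝ =>
                π + ((L - π) / K) * (K * (U - π) / (L - π)) ^ (y / (slo + G))) y := by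
  intro y s μ hslo_s hs_shi _ hμπ
  set b := K * (U - π) / (L - π)
  set p := expPrice π ((L - π) / K) b (slo + G)
  have hb : 1 < b := one_lt_mul_div_sub (by linarith) hπL hLU
  have hp : 0 ≤ p y - π := by
    have : 0 < K := by linarith
    have : 0 < L - π := by linarith
    simp only [p, expPrice, add_sub_cancel_left]
    positivity
  have hlog : Real.log b ≠ 0 := (Real.log_pos hb).ne'
  have hratio : (s + G) / (shi + G) ≤ 1 := (div_le_one (by linarith)).2 (by linarith)
  change p y - μ ≥ 1 / ((shi + G) / (slo + G) * Real.log b) * (s + G) * deriv p y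
  calc 1 / ((shi + G) / (slo + G) * Real.log b) * (s + G) * deriv p y
      = (s + G) / (shi + G) * (p y - π) := by
        rw [deriv_expPrice _ _ _ (by linarith) (by positivity)]
        field_simp
        rfl
    _ ≤ p y - π := mul_le_of_le_one_left hp hratio
    _ ≤ p y - μ := by linarith

/-- Differential Allocation-Payment Relationship for the conservative generation
pricing function `p(y) = π + ((L−π)/K)·(K·(U−π)/(L−π))^(y/(s̲+G))` with
`α₂ = ((s̄+G)/(s̲+G))·ln(K·(U−π)/(L−π))`: for every `y`, every actual solar
value `s ∈ [s̲, s̄]`, and every marginal cost value `μ ∈ [0, π]`,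
`p(y) − μ ≥ (1/α₂)·(s+G)·p'(y)`. -/
theorem stmt_12 (π L U K G slo shi : ℝ) (hπ : 0 ≤ π) (hπL : π < L) (hLU : L < U)
    (hK : 6 ≤ K) (hG : 0 < G) (hslo : 0 ≤ slo) (hs : slo ≤ shi) :
    ∀ y s μ : ℝ, slo ≤ s → s ≤ shi → 0 ≤ μ → μ ≤ π →
      (π + ((L - π) / K) * (K * (U - π) / (L - π)) ^ (y / (slo + G))) - μ
        ≥ (1 / (((shi + G) / (slo + G)) * Real.log (K * (U - π) / (L - π))))
            * (s + G)
            * deriv (fun y : ℝ =>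
                π + ((L - π) / K) * (K * (U - π) / (L - π)) ^ (y / (slo + G))) y :=
  stmt_12_general π L U K G slo shi hπL hLU hK hG hslo
end
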